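/- arXiv:2012.06288 — 5 statements merged into one kernel-verified Lean document; each statement's English description precedes it below -/
import Mathlib

section
/- Let G be a finite simple connected graph. Then the conical hull (the set of all finite nonnegative linear combinations) of CUT(G) equals the conical hull of BOND(G); in particular, the indicator vector of every cut of G is a nonnegative linear combination of indicator vectors of bonds of G. -/
open Finset

namespace BondPolytope

variable {V : Type*}

/-- The cut `δ(S)`: edges of `G` with exactly one endpoint in `S`. -/
def cut (G : SimpleGraph V) (S : Set V) : Set (Sym2 V) :=
  {e | e ∈ G.edgeSet ∧ ∃ u w, e = s(u, w) ∧ u ∈ S ∧ w ∉ S}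

/-- A set of edges is a cut of `G`. -/
def IsCut (G : SimpleGraph V) (D : Set (Sym2 V)) : Prop :=
  ∃ S : Set V, D = cut G S

/-- A set of edges is a bond of `G`: it is a cut `δ(S)` such that both sides induce
connected (possibly empty) subgraphs. -/
def IsBond (G : SimpleGraph V) (D : Set (Sym2 V)) : Prop :=
  ∃ S : Set V, D = cut G S ∧ (G.induce S).Preconnected ∧ (G.induce Sᶜ).Preconnected

open Classical in
/-- The indicator vector `x^δ ∈ ℝ^E` of a set `δ` of edges. -/
noncomputable def indVec (G : SimpleGraph V) (D : Set (Sym2 V)) : ↥G.edgeSet → ℝ :=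
  fun e => if (e : Sym2 V) ∈ D then 1 else 0

/-- The bond polytope `BOND(G) ⊆ ℝ^E`. -/
noncomputable def bondPolytope (G : SimpleGraph V) : Set (↥G.edgeSet → ℝ) :=
  convexHull ℝ {x | ∃ D, IsBond G D ∧ x = indVec G D}

/-- The cut polytope `CUT(G) ⊆ ℝ^E`. -/
noncomputable def cutPolytope (G : SimpleGraph V) : Set (↥G.edgeSet → ℝ) :=
  convexHull ℝ {x | ∃ D, IsCut G D ∧ x = indVec G D}

/-- `a^T x`. -/
noncomputable def dot {ι : Type*} [Fintype ι] (a x : ι → ℝ) : ℝ := ∑ i, a i * x i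

/-- Affine dimension of a set of points. -/
noncomputable def affDim {W : Type*} [AddCommGroup W] [Module ℝ W] (s : Set W) : ℕ :=
  Module.finrank ℝ ↥(vectorSpan ℝ s)

/-- `a^T x ≤ b` is facet-defining for `P`. -/
def IsFacet {ι : Type*} [Fintype ι] (P : Set (ι → ℝ)) (a : ι → ℝ) (b : ℝ) : Prop :=
  a ≠ 0 ∧ (∀ x ∈ P, dot a x ≤ b) ∧ {x ∈ P | dot a x = b}.Nonempty ∧
    affDim {x ∈ P | dot a x = b} + 1 = affDim P


/-- The conical hull: all finite nonnegative linear combinations of elements of `s`. -/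
def conicalHull {W : Type*} [AddCommGroup W] [Module ℝ W] (s : Set W) : Set W :=
  {x | ∃ (t : Finset W) (c : W → ℝ), (∀ y ∈ t, 0 ≤ c y ∧ y ∈ s) ∧ x = ∑ y ∈ t, c y • y}

/-!
Every cut `δ(S)` is a disjoint union of bonds. For a crossing edge `ab` with `a ∈ S`, let `C` be
the component of `a` in `G[S]` and `D` the component of `b` in `G - C`. Every edge leaving `D` goes
from `D \ S` into `C`, so `δ(D) ⊆ δ(S)`, and `δ(D)` is determined by any one of its edges. It is a
bond: `G[D]` is connected by construction, and `G - D` is connected because `C` is, and by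
connectivity of `G` every other component of `G - C` is joined to `C` by an edge. Hence `x^δ(S)` is
a sum of bond vectors, and as convex hulls do not change conical hulls, the two cones agree.
-/

section Cone

variable {W : Type*} [AddCommGroup W] [Module ℝ W]

lemma conicalHull_eq_hull (s : Set W) : conicalHull s = PointedCone.hull ℝ s := by
  ext x
  constructor
  · rintro ⟨t, c, hc, rfl⟩
    exact Submodule.sum_mem _ fun y hy =>
      PointedCone.smul_mem _ (hc y hy).1 (PointedCone.subset_hull (hc y hy).2)
  · intro hx
    obtain ⟨c, hcs, hc, rfl⟩ := PointedCone.mem_hull_set.1 hx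
    exact ⟨c.support, c, fun y hy => ⟨hc y, hcs hy⟩, rfl⟩

lemma hull_convexHull (s : Set W) :
    PointedCone.hull ℝ (convexHull ℝ s) = PointedCone.hull ℝ s :=
  le_antisymm (Submodule.span_le.2 (convexHull_min PointedCone.subset_hull (PointedCone.convex _)))
    (Submodule.span_mono (subset_convexHull ℝ s))

end Cone

section ComponentIn

variable (G : SimpleGraph V) (T : Set V)

/-- The vertex set of the component of `u` in `G[T]`; it is `{u}` when `u ∉ T`. -/
def componentIn (u : V) : Set V := ((G.induce T).spanningCoe.connectedComponentMk u).supp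

variable {G T} {u v w : V}

lemma mem_componentIn_self : u ∈ componentIn G T u :=
  SimpleGraph.ConnectedComponent.connectedComponentMk_mem

lemma componentIn_eq_of_mem (hv : v ∈ componentIn G T u) :
    componentIn G T v = componentIn G T u := by
  rw [componentIn, componentIn, (SimpleGraph.ConnectedComponent.mem_supp_iff _ _).1 hv]

lemma componentIn_subset (hu : u ∈ T) : componentIn G T u ⊆ T := by
  intro v hv
  by_cases h : v = u
  · exact h ▸ hu
  · obtain ⟨x, -, rfl⟩ := (G.induce T).support_spanningCoe ▸
      SimpleGraph.mem_support_of_reachable h (SimpleGraph.ConnectedComponent.exact hv)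
    exact x.2

lemma mem_componentIn_of_adj (hu : u ∈ T) (hv : v ∈ componentIn G T u) (hw : w ∈ T)
    (hvw : G.Adj v w) : w ∈ componentIn G T u := by
  have hadj : (G.induce T).spanningCoe.Adj v w :=
    (SimpleGraph.map_adj _ _ _ _).2 ⟨⟨v, componentIn_subset hu hv⟩, ⟨w, hw⟩, hvw, rfl, rfl⟩
  exact (SimpleGraph.ConnectedComponent.mem_supp_congr_adj _ hadj).1 hv

lemma notMem_of_adj_of_notMem_componentIn (hu : u ∈ T) (hv : v ∈ componentIn G T u)
    (hw : w ∉ componentIn G T u) (hvw : G.Adj v w) : w ∉ T :=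
  fun hwT => hw (mem_componentIn_of_adj hu hv hwT hvw)

lemma connected_induce_componentIn : (G.induce (componentIn G T u)).Connected :=
  (SimpleGraph.ConnectedComponent.maximal_connected_induce_supp _).prop.mono
    (SimpleGraph.comap_monotone _ (G.spanningCoe_induce_le T))

lemma preconnected_induce_compl_componentIn (hG : G.Connected) {C : Set V}
    (hC : (G.induce C).Preconnected) {a b : V} (ha : a ∈ C) (hb : b ∉ C) :
    (G.induce (componentIn G Cᶜ b)ᶜ).Preconnected := by
  have hCD : C ⊆ (componentIn G Cᶜ b)ᶜ := fun x hx hxD => componentIn_subset hb hxD hx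
  refine (SimpleGraph.induce_connected_of_patches a (hCD ha) fun {v} hv => ?_).preconnected
  by_cases hvC : v ∈ C
  · exact ⟨C, hCD, ha, hvC, hC _ _⟩
  set K := componentIn G Cᶜ v
  have hKD : K ⊆ (componentIn G Cᶜ b)ᶜ := fun x hxK hxD =>
    hv (componentIn_eq_of_mem hxD ▸ componentIn_eq_of_mem hxK ▸ mem_componentIn_self)
  obtain ⟨d, -, hdK, hdK'⟩ :=
    ((hG.preconnected v a).some).exists_boundary_dart K mem_componentIn_self
      fun haK => componentIn_subset hvC haK ha
  have hdC : d.snd ∈ C := by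
    simpa using notMem_of_adj_of_notMem_componentIn hvC hdK hdK' d.adj
  have hCK := SimpleGraph.connected_induce_union hC connected_induce_componentIn.preconnected
    hdC hdK d.adj.symm
  exact ⟨C ∪ K, Set.union_subset hCD hKD, Or.inl ha, Or.inr mem_componentIn_self,
    hCK.preconnected _ _⟩

end ComponentIn

section BondSide

variable {G : SimpleGraph V} {S : Set V} {a b : V}

variable (G S) in
def bondSide (a b : V) : Set V := componentIn G (componentIn G S a)ᶜ b

lemma notMem_componentIn_of_notMem (ha : a ∈ S) (hb : b ∉ S) : b ∉ componentIn G S a :=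
  fun h => hb (componentIn_subset ha h)

lemma mem_componentIn_of_adj_bondSide (ha : a ∈ S) (hb : b ∉ S) {v w : V}
    (hv : v ∈ bondSide G S a b) (hw : w ∉ bondSide G S a b) (hvw : G.Adj v w) :
    w ∈ componentIn G S a ∧ v ∉ S := by
  have hb' := notMem_componentIn_of_notMem (G := G) ha hb
  have hwC : w ∈ componentIn G S a := by
    simpa using notMem_of_adj_of_notMem_componentIn hb' hv hw hvw
  exact ⟨hwC, fun hvS => componentIn_subset hb' hv (mem_componentIn_of_adj ha hwC hvS hvw.symm)⟩

lemma cut_bondSide_subset (ha : a ∈ S) (hb : b ∉ S) : cut G (bondSide G S a b) ⊆ cut G S := by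
  rintro e ⟨he, v, w, rfl, hv, hw⟩
  obtain ⟨hwC, hvS⟩ := mem_componentIn_of_adj_bondSide ha hb hv hw he
  exact ⟨he, w, v, Sym2.eq_swap, componentIn_subset ha hwC, hvS⟩

lemma mem_cut_bondSide (hab : G.Adj a b) (ha : a ∈ S) (hb : b ∉ S) :
    s(a, b) ∈ cut G (bondSide G S a b) :=
  ⟨hab, b, a, Sym2.eq_swap, mem_componentIn_self,
    fun haD => componentIn_subset (notMem_componentIn_of_notMem ha hb) haD mem_componentIn_self⟩

lemma bondSide_eq_of_mem_cut {a' b' : V} (ha' : a' ∈ S) (hb' : b' ∉ S) (ha : a ∈ S)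
    (h : s(a, b) ∈ cut G (bondSide G S a' b')) : bondSide G S a b = bondSide G S a' b' := by
  obtain ⟨he, v, w, hvw, hv, hw⟩ := h
  obtain ⟨hwC, hvS⟩ :=
    mem_componentIn_of_adj_bondSide ha' hb' hv hw (G.mem_edgeSet.1 (hvw ▸ he))
  obtain ⟨rfl, rfl⟩ : a = w ∧ b = v := by
    rcases Sym2.eq_iff.1 hvw with ⟨rfl, -⟩ | h
    · exact absurd ha hvS
    · exact h
  rw [bondSide, componentIn_eq_of_mem hwC, componentIn_eq_of_mem hv, bondSide]

lemma isBond_cut_bondSide (hG : G.Connected) (ha : a ∈ S) (hb : b ∉ S) :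
    IsBond G (cut G (bondSide G S a b)) :=
  ⟨_, rfl, connected_induce_componentIn.preconnected,
    preconnected_induce_compl_componentIn hG connected_induce_componentIn.preconnected
      mem_componentIn_self (notMem_componentIn_of_notMem ha hb)⟩

end BondSide

lemma indVec_biUnion (G : SimpleGraph V) {ι : Type*} (t : Finset ι) (D : ι → Set (Sym2 V))
    (hD : (t : Set ι).PairwiseDisjoint D) :
    indVec G (⋃ i ∈ t, D i) = ∑ i ∈ t, indVec G (D i) := by
  classical
  ext e
  simpa only [indVec, Finset.sum_apply, Set.indicator_apply] using
    Finset.indicator_biUnion_apply t D (f := fun _ => 1) hD (e : Sym2 V)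

section BondSides

variable (G : SimpleGraph V) (S : Set V)

def bondSides : Set (Set V) :=
  {D | ∃ a b, G.Adj a b ∧ a ∈ S ∧ b ∉ S ∧ D = bondSide G S a b}

lemma pairwiseDisjoint_cut_bondSides : (bondSides G S).PairwiseDisjoint (cut G) := by
  rintro _ ⟨a, b, -, ha, hb, rfl⟩ _ ⟨a', b', -, ha', hb', rfl⟩ hne
  refine Set.disjoint_left.2 fun e he he' => hne ?_
  obtain ⟨-, x, y, rfl, hx, hy⟩ := cut_bondSide_subset ha hb he
  exact (bondSide_eq_of_mem_cut ha hb hx he).symm.trans (bondSide_eq_of_mem_cut ha' hb' hx he')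

lemma biUnion_cut_bondSides : ⋃ D ∈ bondSides G S, cut G D = cut G S := by
  refine Set.Subset.antisymm (Set.iUnion₂_subset ?_) ?_
  · rintro _ ⟨a, b, -, ha, hb, rfl⟩
    exact cut_bondSide_subset ha hb
  · rintro _ ⟨hab, a, b, rfl, ha, hb⟩
    exact Set.mem_biUnion ⟨a, b, hab, ha, hb, rfl⟩ (mem_cut_bondSide hab ha hb)

lemma indVec_cut_mem_hull_bonds [Finite V] (hG : G.Connected) :
    indVec G (cut G S) ∈ PointedCone.hull ℝ {x | ∃ D, IsBond G D ∧ x = indVec G D} := by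
  have hfin := (bondSides G S).toFinite
  have hdisj := pairwiseDisjoint_cut_bondSides G S
  rw [← hfin.coe_toFinset] at hdisj
  rw [← biUnion_cut_bondSides, ← hfin.coe_toFinset, Finset.set_biUnion_coe,
    indVec_biUnion G _ _ hdisj]
  refine Submodule.sum_mem _ fun D hD => PointedCone.subset_hull ⟨_, ?_, rfl⟩
  obtain ⟨a, b, -, ha, hb, rfl⟩ := hfin.mem_toFinset.1 hD
  exact isBond_cut_bondSide hG ha hb

end BondSides

theorem cone_cutPolytope_eq_cone_bondPolytope_general {V : Type*} [Fintype V]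
    (G : SimpleGraph V) (hG : G.Connected) :
    conicalHull (cutPolytope G) = conicalHull (bondPolytope G) ∧
      ∀ S : Set V, indVec G (cut G S) ∈
        conicalHull {x : ↥G.edgeSet → ℝ | ∃ D, IsBond G D ∧ x = indVec G D} := by
  refine ⟨?_, fun S => by rw [conicalHull_eq_hull]; exact indVec_cut_mem_hull_bonds G S hG⟩
  rw [cutPolytope, bondPolytope, conicalHull_eq_hull, conicalHull_eq_hull, hull_convexHull,
    hull_convexHull]
  congr 1
  refine le_antisymm (Submodule.span_le.2 ?_) (Submodule.span_mono ?_)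
  · rintro _ ⟨D, ⟨S, rfl⟩, rfl⟩
    exact indVec_cut_mem_hull_bonds G S hG
  · rintro _ ⟨D, ⟨S, hS, -⟩, rfl⟩
    exact ⟨D, ⟨S, hS⟩, rfl⟩

theorem cone_cutPolytope_eq_cone_bondPolytope {V : Type*} [Fintype V] [DecidableEq V]
    (G : SimpleGraph V) [DecidableRel G.Adj] (hG : G.Connected) :
    conicalHull (cutPolytope G) = conicalHull (bondPolytope G) ∧
      ∀ S : Set V, indVec G (cut G S) ∈
        conicalHull {x : ↥G.edgeSet → ℝ | ∃ D, IsBond G D ∧ x = indVec G D} :=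
  cone_cutPolytope_eq_cone_bondPolytope_general G hG

end BondPolytope
end

section
/- Let G be a finite simple connected graph with edge set E. Then the bond polytope BOND(G) has affine dimension |E|; equivalently, the affine span of BOND(G) is all of ℝ^E. -/
open Finset

namespace BondPolytope

variable {V : Type*}

variable {G : SimpleGraph V}

lemma mem_cut_iff {S : Set V} {x y : V} (h : G.Adj x y) :
    s(x, y) ∈ cut G S ↔ (x ∈ S ∧ y ∉ S) ∨ (y ∈ S ∧ x ∉ S) := by
  constructor
  · rintro ⟨-, u, w, he, hu, hw⟩
    rw [Sym2.eq_iff] at he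
    rcases he with ⟨rfl, rfl⟩ | ⟨rfl, rfl⟩
    · exact Or.inl ⟨hu, hw⟩
    · exact Or.inr ⟨hu, hw⟩
  · rintro (⟨hx, hy⟩ | ⟨hy, hx⟩)
    · exact ⟨h, x, y, rfl, hx, hy⟩
    · exact ⟨h, y, x, Sym2.eq_swap.symm, hy, hx⟩

/-- The component of `c` of `G` minus `W`, as a subset of `V`. -/
def compSet (G : SimpleGraph V) (W : Set V)
    (c : (G.induce Wᶜ).ConnectedComponent) : Set V :=
  {v | ∃ h : v ∈ Wᶜ, (G.induce Wᶜ).connectedComponentMk ⟨v, h⟩ = c}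

lemma compSet_subset {W : Set V} {c : (G.induce Wᶜ).ConnectedComponent} :
    compSet G W c ⊆ Wᶜ := fun _ hv => hv.1

lemma reachable_induce_mono {S T : Set V} (hST : S ⊆ T) {a b : V} (ha : a ∈ S) (hb : b ∈ S)
    (h : (G.induce S).Reachable ⟨a, ha⟩ ⟨b, hb⟩) :
    (G.induce T).Reachable ⟨a, hST ha⟩ ⟨b, hST hb⟩ := by
  let φ : G.induce S →g G.induce T :=
    { toFun := fun v => ⟨v.1, hST v.2⟩, map_rel' := fun hadj => hadj }
  exact h.map φ

lemma walk_in_component {W : Set V} {c : (G.induce Wᶜ).ConnectedComponent} {a b : ↥Wᶜ}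
    (p : (G.induce Wᶜ).Walk a b) :
    ∀ (ha : a.1 ∈ compSet G W c) (hb : b.1 ∈ compSet G W c),
      (G.induce (compSet G W c)).Reachable ⟨a.1, ha⟩ ⟨b.1, hb⟩ := by
  induction p with
  | nil => intro ha hb; exact SimpleGraph.Reachable.refl _
  | @cons u x w h q ih =>
      intro ha hb
      have hx : x.1 ∈ compSet G W c := by
        obtain ⟨h1, h2⟩ := ha
        exact ⟨x.2, ((SimpleGraph.ConnectedComponent.connectedComponentMk_eq_of_adj h).symm.trans
          h2 : _)⟩
      have hadj : (G.induce (compSet G W c)).Adj ⟨u.1, ha⟩ ⟨x.1, hx⟩ := h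
      exact hadj.reachable.trans (ih hx hb)

lemma reach_base {W : Set V} (hWconn : (G.induce W).Preconnected)
    {c : (G.induce Wᶜ).ConnectedComponent} {x w0 : V} (p : G.Walk x w0) :
    ∀ (hw0 : w0 ∈ W) (hx : x ∈ (compSet G W c)ᶜ),
      (G.induce (compSet G W c)ᶜ).Reachable ⟨x, hx⟩
        ⟨w0, fun hmem => (compSet_subset hmem) hw0⟩ := by
  induction p with
  | nil => intro hw0 hx; exact SimpleGraph.Reachable.refl _
  | @cons u z w h q ih =>
      intro hw0 hx
      by_cases huW : u ∈ W
      · have hr := hWconn ⟨u, huW⟩ ⟨w, hw0⟩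
        have hsub : W ⊆ (compSet G W c)ᶜ := fun v hv hmem => (compSet_subset hmem) hv
        exact reachable_induce_mono hsub huW hw0 hr
      · have hz : z ∈ (compSet G W c)ᶜ := by
          intro hzc
          apply hx
          obtain ⟨hz1, hz2⟩ := hzc
          have hadj : (G.induce Wᶜ).Adj ⟨u, huW⟩ ⟨z, hz1⟩ := h
          exact ⟨huW, (SimpleGraph.ConnectedComponent.connectedComponentMk_eq_of_adj hadj).trans
            hz2⟩
        have hadj : (G.induce (compSet G W c)ᶜ).Adj ⟨u, hx⟩ ⟨z, hz⟩ := h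
        exact hadj.reachable.trans (ih hw0 hz)

lemma isBond_cut_compSet (hG : G.Preconnected) {W : Set V} (hWne : W.Nonempty)
    (hWconn : (G.induce W).Preconnected) (c : (G.induce Wᶜ).ConnectedComponent) :
    IsBond G (cut G (compSet G W c)) := by
  refine ⟨_, rfl, ?_, ?_⟩
  · rintro ⟨x, hx⟩ ⟨y, hy⟩
    obtain ⟨hx1, hx2⟩ := hx
    obtain ⟨hy1, hy2⟩ := hy
    obtain ⟨p⟩ := SimpleGraph.ConnectedComponent.exact (hx2.trans hy2.symm)
    exact walk_in_component p ⟨hx1, hx2⟩ ⟨hy1, hy2⟩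
  · rintro ⟨x, hx⟩ ⟨y, hy⟩
    obtain ⟨w0, hw0⟩ := hWne
    obtain ⟨p⟩ := hG x w0
    obtain ⟨q⟩ := hG y w0
    exact (reach_base hWconn p hw0 hx).trans (reach_base hWconn q hw0 hy).symm

lemma indVec_cut_eq_sum [Fintype V] (W : Set V)
    [Fintype (G.induce Wᶜ).ConnectedComponent] (f : ↥G.edgeSet) :
    indVec G (cut G W) f = ∑ c, indVec G (cut G (compSet G W c)) f := by
  classical
  obtain ⟨fe, hfe⟩ := f
  induction fe using Sym2.ind with
  | _ x y =>
    have hadj : G.Adj x y := hfe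
    simp only [indVec]
    by_cases hx : x ∈ W <;> by_cases hy : y ∈ W
    · rw [if_neg, Finset.sum_eq_zero]
      · intro c _
        rw [if_neg]
        rw [mem_cut_iff hadj]
        rintro (⟨h1, -⟩ | ⟨h1, -⟩)
        · exact (compSet_subset h1) hx
        · exact (compSet_subset h1) hy
      · rw [mem_cut_iff hadj]
        rintro (⟨-, h2⟩ | ⟨-, h2⟩) <;> [exact h2 hy; exact h2 hx]
    · -- x ∈ W, y ∉ W
      have hyc : y ∈ Wᶜ := hy
      set c0 := (G.induce Wᶜ).connectedComponentMk ⟨y, hyc⟩ with hc0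
      rw [if_pos (by rw [mem_cut_iff hadj]; exact Or.inl ⟨hx, hy⟩)]
      have key : ∀ c, (if s(x, y) ∈ cut G (compSet G W c) then (1:ℝ) else 0)
          = if c = c0 then 1 else 0 := by
        intro c
        by_cases hc : c = c0
        · subst hc
          rw [if_pos, if_pos rfl]
          rw [mem_cut_iff hadj]
          exact Or.inr ⟨⟨hyc, rfl⟩, fun hmem => (compSet_subset hmem) hx⟩
        · rw [if_neg, if_neg hc]
          rw [mem_cut_iff hadj]
          rintro (⟨h1, -⟩ | ⟨h1, -⟩)
          · exact (compSet_subset h1) hx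
          · obtain ⟨h1', h2'⟩ := h1
            exact hc h2'.symm
      rw [Finset.sum_congr rfl fun c _ => key c, Finset.sum_ite_eq' _ c0, if_pos (mem_univ _)]
    · -- y ∈ W, x ∉ W
      have hxc : x ∈ Wᶜ := hx
      set c0 := (G.induce Wᶜ).connectedComponentMk ⟨x, hxc⟩ with hc0
      rw [if_pos (by rw [mem_cut_iff hadj]; exact Or.inr ⟨hy, hx⟩)]
      have key : ∀ c, (if s(x, y) ∈ cut G (compSet G W c) then (1:ℝ) else 0)
          = if c = c0 then 1 else 0 := by
        intro c
        by_cases hc : c = c0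
        · subst hc
          rw [if_pos, if_pos rfl]
          rw [mem_cut_iff hadj]
          exact Or.inl ⟨⟨hxc, rfl⟩, fun hmem => (compSet_subset hmem) hy⟩
        · rw [if_neg, if_neg hc]
          rw [mem_cut_iff hadj]
          rintro (⟨h1, -⟩ | ⟨h1, -⟩)
          · obtain ⟨h1', h2'⟩ := h1
            exact hc h2'.symm
          · exact (compSet_subset h1) hy
      rw [Finset.sum_congr rfl fun c _ => key c, Finset.sum_ite_eq' _ c0, if_pos (mem_univ _)]
    · -- both outside W
      have hxc : x ∈ Wᶜ := hx
      have hyc : y ∈ Wᶜ := hy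
      have hadj' : (G.induce Wᶜ).Adj ⟨x, hxc⟩ ⟨y, hyc⟩ := hadj
      have hmk := SimpleGraph.ConnectedComponent.connectedComponentMk_eq_of_adj hadj'
      rw [if_neg, Finset.sum_eq_zero]
      · intro c _
        rw [if_neg]
        rw [mem_cut_iff hadj]
        rintro (⟨⟨h1, h2⟩, h3⟩ | ⟨⟨h1, h2⟩, h3⟩)
        · exact h3 ⟨hyc, hmk.symm.trans h2⟩
        · exact h3 ⟨hxc, hmk.trans h2⟩
      · rw [mem_cut_iff hadj]
        rintro (⟨h1, -⟩ | ⟨h1, -⟩) <;> [exact hx h1; exact hy h1]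


lemma indVec_cut_mem_span [Fintype V] (hG : G.Preconnected) {W : Set V}
    (hWne : W.Nonempty) (hWconn : (G.induce W).Preconnected) :
    indVec G (cut G W) ∈
      Submodule.span ℝ {x : ↥G.edgeSet → ℝ | ∃ D, IsBond G D ∧ x = indVec G D} := by
  classical
  haveI : Finite ((G.induce Wᶜ).ConnectedComponent) := Quot.finite _
  letI : Fintype ((G.induce Wᶜ).ConnectedComponent) := Fintype.ofFinite _
  have h : indVec G (cut G W) = ∑ c, indVec G (cut G (compSet G W c)) := by
    funext f
    rw [indVec_cut_eq_sum W f]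
    simp [Finset.sum_apply]
  rw [h]
  exact Submodule.sum_mem _ fun c _ =>
    Submodule.subset_span ⟨_, isBond_cut_compSet hG hWne hWconn c, rfl⟩

lemma preconnected_singleton (u : V) : (G.induce {u}).Preconnected := by
  rintro ⟨a, ha⟩ ⟨b, hb⟩
  rw [Set.mem_singleton_iff] at ha hb
  subst ha; subst hb
  exact SimpleGraph.Reachable.refl _

lemma preconnected_pair {u v : V} (h : G.Adj u v) : (G.induce {u, v}).Preconnected := by
  have key : ∀ a (ha : a ∈ ({u, v} : Set V)),
      (G.induce {u, v}).Reachable ⟨a, ha⟩ ⟨u, Or.inl rfl⟩ := by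
    intro a ha
    rcases Set.mem_insert_iff.mp ha with h' | h'
    · subst h'; exact SimpleGraph.Reachable.refl _
    · rw [Set.mem_singleton_iff] at h'
      subst h'
      have hadj : (G.induce ({u, a} : Set V)).Adj ⟨a, ha⟩ ⟨u, Or.inl rfl⟩ := h.symm
      exact hadj.reachable
  rintro ⟨a, ha⟩ ⟨b, hb⟩
  exact (key a ha).trans (key b hb).symm

lemma single_eq [Fintype V] [DecidableEq V] {u v : V} (hadj : G.Adj u v) (e0 : ↥G.edgeSet)
    (he : (e0 : Sym2 V) = s(u, v)) :
    (Pi.single e0 (1:ℝ) : ↥G.edgeSet → ℝ)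
      = (2⁻¹ : ℝ) • (indVec G (cut G {u}) + indVec G (cut G {v})
          - indVec G (cut G ({u, v} : Set V))) := by
  classical
  have huv : u ≠ v := hadj.ne
  funext f
  obtain ⟨fe, hfe⟩ := f
  induction fe using Sym2.ind with
  | _ x y =>
    have hfadj : G.Adj x y := hfe
    have hxy : x ≠ y := hfadj.ne
    have hEq : ((⟨s(x,y), hfe⟩ : ↥G.edgeSet) = e0) ↔ ((x = u ∧ y = v) ∨ (x = v ∧ y = u)) := by
      rw [Subtype.ext_iff, he, Sym2.eq_iff]
    have h1 : (s(x,y) ∈ cut G ({u} : Set V)) ↔ ((x = u ∧ ¬ y = u) ∨ (y = u ∧ ¬ x = u)) := by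
      rw [mem_cut_iff hfadj]; simp [Set.mem_singleton_iff]
    have h2 : (s(x,y) ∈ cut G ({v} : Set V)) ↔ ((x = v ∧ ¬ y = v) ∨ (y = v ∧ ¬ x = v)) := by
      rw [mem_cut_iff hfadj]; simp [Set.mem_singleton_iff]
    have h3 : (s(x,y) ∈ cut G ({u, v} : Set V)) ↔
        (((x = u ∨ x = v) ∧ ¬(y = u ∨ y = v)) ∨ ((y = u ∨ y = v) ∧ ¬(x = u ∨ x = v))) := by
      rw [mem_cut_iff hfadj]; simp [Set.mem_insert_iff, Set.mem_singleton_iff]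
    simp only [Pi.single_apply, Pi.smul_apply, Pi.add_apply, Pi.sub_apply, smul_eq_mul, indVec,
      hEq, h1, h2, h3]
    by_cases hxu : x = u <;> by_cases hxv : x = v <;> by_cases hyu : y = u <;>
      by_cases hyv : y = v <;> simp_all <;> norm_num


theorem bondPolytope_fullDimensional' {V : Type*} [Fintype V] [DecidableEq V]
    (G : SimpleGraph V) [DecidableRel G.Adj] (hG : G.Connected) :
    Module.finrank ℝ ↥(vectorSpan ℝ (convexHull ℝ {x | ∃ D, IsBond G D ∧ x = indVec G D}))
        = Fintype.card ↥G.edgeSet ∧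
      affineSpan ℝ (convexHull ℝ {x | ∃ D, IsBond G D ∧ x = indVec G D}) = ⊤ := by
  classical
  set s : Set (↥G.edgeSet → ℝ) := {x | ∃ D, IsBond G D ∧ x = indVec G D} with hsdef
  have hbond0 : IsBond G (∅ : Set (Sym2 V)) := by
    refine ⟨∅, ?_, ?_, ?_⟩
    · ext e; simp [cut]
    · rintro ⟨v, hv⟩; exact absurd hv (Set.notMem_empty v)
    · intro a b
      have hre : G.Reachable a.1 b.1 := hG.preconnected a.1 b.1
      have hm := hre.map
        (⟨fun w => ⟨w, fun h => h⟩, fun hadj => hadj⟩ : G →g G.induce ((∅ : Set V)ᶜ))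
      exact hm
  have hz : indVec G (∅ : Set (Sym2 V)) = 0 := by funext f; simp [indVec]
  have h0 : (0 : ↥G.edgeSet → ℝ) ∈ s := ⟨∅, hbond0, hz.symm⟩
  have hsingle : ∀ e0 : ↥G.edgeSet, Pi.single e0 (1:ℝ) ∈ Submodule.span ℝ s := by
    rintro ⟨e, he⟩
    induction e using Sym2.ind with
    | _ u v =>
      have hadj : G.Adj u v := he
      rw [single_eq hadj ⟨s(u,v), he⟩ rfl]
      refine Submodule.smul_mem _ _ (Submodule.sub_mem _ (Submodule.add_mem _ ?_ ?_) ?_)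
      · exact indVec_cut_mem_span hG.preconnected ⟨u, rfl⟩ (preconnected_singleton u)
      · exact indVec_cut_mem_span hG.preconnected ⟨v, rfl⟩ (preconnected_singleton v)
      · exact indVec_cut_mem_span hG.preconnected ⟨u, Or.inl rfl⟩ (preconnected_pair hadj)
  have hspan : Submodule.span ℝ s = ⊤ := by
    rw [eq_top_iff]
    rintro x -
    have hx : x = ∑ e0, (x e0) • (Pi.single e0 (1:ℝ) : ↥G.edgeSet → ℝ) := by
      funext j
      simp [Pi.single_apply, Finset.sum_apply, mul_ite]
    rw [hx]
    exact Submodule.sum_mem _ fun e0 _ => Submodule.smul_mem _ _ (hsingle e0)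
  have hvs : vectorSpan ℝ s = ⊤ := by
    rw [eq_top_iff, ← hspan, Submodule.span_le]
    intro y hy
    have := vsub_mem_vectorSpan ℝ hy h0
    simpa using this
  have haff : affineSpan ℝ s = ⊤ :=
    (AffineSubspace.affineSpan_eq_top_iff_vectorSpan_eq_top_of_nonempty ℝ _ _ ⟨0, h0⟩).mpr hvs
  have haff2 : affineSpan ℝ (convexHull ℝ s) = ⊤ := by
    rw [affineSpan_convexHull]; exact haff
  refine ⟨?_, haff2⟩
  have hvs2 : vectorSpan ℝ (convexHull ℝ s) = ⊤ := by
    rw [← direction_affineSpan, haff2, AffineSubspace.direction_top]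
  rw [hvs2, finrank_top, Module.finrank_fintype_fun_eq_card]


theorem bondPolytope_fullDimensional {V : Type*} [Fintype V] [DecidableEq V]
    (G : SimpleGraph V) [DecidableRel G.Adj] (hG : G.Connected) :
    affDim (bondPolytope G) = Fintype.card ↥G.edgeSet ∧
      affineSpan ℝ (bondPolytope G) = ⊤ :=
  bondPolytope_fullDimensional' G hG

end BondPolytope
end

section
/- Let G be a finite simple connected graph with edge set E and let a ∈ ℝ^E with a ≠ 0. The homogeneous inequality a^T x ≤ 0 is facet-defining for BOND(G) if and only if it is facet-defining for CUT(G). -/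
open Finset

namespace BondPolytope

variable {V : Type*}

/-!
Every cut of a connected graph is a disjoint union of bonds: if `G[S]` is disconnected and `C`
is the vertex set of one of its components, then `δ(S)` is the disjoint union of the nonempty,
hence strictly smaller, cuts `δ(C)` and `δ(S ∖ C)`; by `δ(S) = δ(Sᶜ)` this covers the case of a
disconnected `G[Sᶜ]` too. So every cut vector is a sum of bond vectors, and `0 = x^{δ(∅)}` is a
bond vector. For an inequality `a^T x ≤ 0` it follows that validity on bonds and on cuts agree,
that the tight cut vectors are sums of tight bond vectors, and that both polytopes and both faces
have the same linear span; as all four sets contain `0`, their affine dimensions are the ranks of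
these spans.
-/

section Convex

variable {E : Type*} [AddCommGroup E] [Module ℝ E] (f : E →ₗ[ℝ] ℝ) {s : Set E}

theorem nonpos_of_mem_convexHull (hf : ∀ x ∈ s, f x ≤ 0) {x : E} (hx : x ∈ convexHull ℝ s) :
    f x ≤ 0 :=
  convexHull_min hf (convex_halfSpace_le f.isLinear 0) hx

theorem sep_convexHull_eq_convexHull_sep (hf : ∀ x ∈ s, f x ≤ 0) :
    {x ∈ convexHull ℝ s | f x = 0} = convexHull ℝ {x ∈ s | f x = 0} := by
  classical
  refine subset_antisymm ?_ fun x hx => ⟨convexHull_mono (Set.sep_subset _ _) hx, ?_⟩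
  · rintro x ⟨hx, hfx⟩
    obtain ⟨ι, t, w, z, hw₀, hw₁, hz, rfl⟩ := (convexHull_eq s).subset hx
    have hterm_nonpos : ∀ i ∈ t, w i * f (z i) ≤ 0 := fun i hi =>
      mul_nonpos_of_nonneg_of_nonpos (hw₀ i hi) (hf _ (hz i hi))
    have hterm_zero : ∀ i ∈ t, w i * f (z i) = 0 := by
      refine (sum_eq_zero_iff_of_nonpos hterm_nonpos).1 ?_
      simpa [centerMass_eq_of_sum_1 _ _ hw₁, map_sum] using hfx
    rw [← centerMass_filter_ne_zero]
    refine centerMass_mem_convexHull _ (fun i hi => hw₀ i (mem_filter.1 hi).1)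
      (by rw [sum_filter_ne_zero, hw₁]; exact one_pos) fun i hi => ?_
    obtain ⟨hit, hwi⟩ := mem_filter.1 hi
    exact ⟨hz i hit, (mul_eq_zero.1 (hterm_zero i hit)).resolve_left hwi⟩
  · exact convexHull_min (fun y hy => hy.2) (LinearMap.ker f).convex hx

theorem affDim_convexHull_of_zero_mem (h0 : 0 ∈ s) :
    affDim (convexHull ℝ s) = Module.finrank ℝ (Submodule.span ℝ s) := by
  have hspan : vectorSpan ℝ s = Submodule.span ℝ s := by
    simp [vectorSpan_eq_span_vsub_set_right ℝ h0]
  rw [affDim, ← direction_affineSpan, affineSpan_convexHull, direction_affineSpan, hspan]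

theorem affDim_sep_convexHull (hf : ∀ x ∈ s, f x ≤ 0) (h0 : 0 ∈ s) :
    affDim {x ∈ convexHull ℝ s | f x = 0} =
      Module.finrank ℝ (Submodule.span ℝ {x ∈ s | f x = 0}) := by
  rw [sep_convexHull_eq_convexHull_sep f hf]
  exact affDim_convexHull_of_zero_mem ⟨h0, map_zero f⟩

end Convex

section Closure

variable {M F : Type*} [AddCommMonoid M] [FunLike F M ℝ] [AddMonoidHomClass F M ℝ] {B C : Set M}

theorem nonpos_of_mem_addSubmonoidClosure (f : F) (hf : ∀ x ∈ B, f x ≤ 0) {x : M}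
    (hx : x ∈ AddSubmonoid.closure B) : f x ≤ 0 := by
  induction hx using AddSubmonoid.closure_induction with
  | mem x hx => exact hf x hx
  | zero => simp
  | add x y _ _ hx hy => simpa using add_nonpos hx hy

theorem mem_addSubmonoidClosure_sep (f : F) (hf : ∀ x ∈ B, f x ≤ 0) {x : M}
    (hx : x ∈ AddSubmonoid.closure B) (hfx : f x = 0) :
    x ∈ AddSubmonoid.closure {y ∈ B | f y = 0} := by
  induction hx using AddSubmonoid.closure_induction with
  | mem x hx => exact AddSubmonoid.subset_closure ⟨hx, hfx⟩
  | zero => exact zero_mem _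
  | add x y hxB hyB hx hy =>
    have hx₀ := nonpos_of_mem_addSubmonoidClosure f hf hxB
    have hy₀ := nonpos_of_mem_addSubmonoidClosure f hf hyB
    rw [map_add] at hfx
    exact add_mem (hx (by linarith)) (hy (by linarith))

theorem span_eq_of_subset_addSubmonoidClosure {R : Type*} [Semiring R] [Module R M]
    (hBC : B ⊆ C) (hCB : C ⊆ AddSubmonoid.closure B) :
    Submodule.span R C = Submodule.span R B :=
  le_antisymm ((Submodule.span_mono hCB).trans_eq Submodule.span_closure)
    (Submodule.span_mono hBC)

end Closure

section Facet

variable {ι : Type*} [Fintype ι]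

theorem isFacet_convexHull_iff {s : Set (ι → ℝ)} (h0 : 0 ∈ s) (a : ι → ℝ) :
    IsFacet (convexHull ℝ s) a 0 ↔ a ≠ 0 ∧ (∀ x ∈ s, dot a x ≤ 0) ∧
      Module.finrank ℝ (Submodule.span ℝ {x ∈ s | dot a x = 0}) + 1 =
        Module.finrank ℝ (Submodule.span ℝ s) := by
  have hface : (∀ x ∈ s, dot a x ≤ 0) → affDim {x ∈ convexHull ℝ s | dot a x = 0} =
      Module.finrank ℝ (Submodule.span ℝ {x ∈ s | dot a x = 0}) := fun hs =>
    affDim_sep_convexHull (dotProductBilin ℝ ℝ a) hs h0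
  rw [IsFacet, affDim_convexHull_of_zero_mem h0]
  constructor
  · rintro ⟨ha, hvalid, -, hdim⟩
    have hs : ∀ x ∈ s, dot a x ≤ 0 := fun x hx => hvalid x (subset_convexHull ℝ s hx)
    exact ⟨ha, hs, hface hs ▸ hdim⟩
  · rintro ⟨ha, hs, hdim⟩
    exact ⟨ha, fun x hx => nonpos_of_mem_convexHull (dotProductBilin ℝ ℝ a) hs hx,
      ⟨0, subset_convexHull ℝ s h0, by simp [dot]⟩, hface hs ▸ hdim⟩

theorem isFacet_convexHull_iff_of_subset_addSubmonoidClosure {B C : Set (ι → ℝ)} (h0 : 0 ∈ B)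
    (hBC : B ⊆ C) (hCB : C ⊆ AddSubmonoid.closure B) (a : ι → ℝ) :
    IsFacet (convexHull ℝ B) a 0 ↔ IsFacet (convexHull ℝ C) a 0 := by
  let f := dotProductBilin ℝ ℝ a
  have hvalid : (∀ x ∈ B, dot a x ≤ 0) ↔ ∀ x ∈ C, dot a x ≤ 0 :=
    ⟨fun hB x hx => nonpos_of_mem_addSubmonoidClosure f hB (hCB hx), fun hC x hx => hC x (hBC hx)⟩
  have hface : (∀ x ∈ B, dot a x ≤ 0) →
      Submodule.span ℝ {x ∈ C | dot a x = 0} = Submodule.span ℝ {x ∈ B | dot a x = 0} :=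
    fun hB => span_eq_of_subset_addSubmonoidClosure (fun x hx => ⟨hBC hx.1, hx.2⟩)
      fun x hx => mem_addSubmonoidClosure_sep f hB (hCB hx.1) hx.2
  rw [isFacet_convexHull_iff h0, isFacet_convexHull_iff (hBC h0),
    span_eq_of_subset_addSubmonoidClosure hBC hCB]
  refine and_congr_right fun _ => ⟨fun ⟨hB, hdim⟩ => ?_, fun ⟨hC, hdim⟩ => ?_⟩
  · exact ⟨hvalid.1 hB, by rwa [hface hB]⟩
  · exact ⟨hvalid.2 hC, by rwa [← hface (hvalid.2 hC)]⟩

end Facet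

section Graph

variable {G : SimpleGraph V}

theorem mem_cut {S : Set V} {x y : V} : s(x, y) ∈ cut G S ↔ G.Adj x y ∧ ¬(x ∈ S ↔ y ∈ S) := by
  constructor
  · rintro ⟨hxy, u, w, huw, hu, hw⟩
    rcases Sym2.eq_iff.1 huw with ⟨rfl, rfl⟩ | ⟨rfl, rfl⟩ <;> exact ⟨hxy, by tauto⟩
  · rintro ⟨hxy, hS⟩
    by_cases hx : x ∈ S
    · exact ⟨hxy, x, y, rfl, hx, by tauto⟩
    · exact ⟨hxy, y, x, Sym2.eq_swap, by tauto, hx⟩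

theorem cut_compl (S : Set V) : cut G Sᶜ = cut G S := by
  ext e
  induction e using Sym2.ind
  simp only [mem_cut, Set.mem_compl_iff, not_iff_not]

theorem cut_empty : cut G ∅ = ∅ := by
  ext e
  induction e using Sym2.ind
  simp [mem_cut]

theorem cut_nonempty (hG : G.Preconnected) {S : Set V} {u v : V} (hu : u ∈ S) (hv : v ∉ S) :
    (cut G S).Nonempty := by
  obtain ⟨p⟩ := hG u v
  obtain ⟨d, -, hd₁, hd₂⟩ := p.exists_boundary_dart S hu hv
  exact ⟨s(d.fst, d.snd), mem_cut.2 ⟨d.adj, by tauto⟩⟩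

theorem cut_union_cut_diff {C T : Set V} (hCT : C ⊆ T) (hC : ∀ x ∈ C, ∀ y ∈ T \ C, ¬G.Adj x y) :
    cut G C ∪ cut G (T \ C) = cut G T := by
  ext e
  induction e using Sym2.ind with | _ x y =>
  have hxy := hC x
  have hyx := hC y
  have hx := @hCT x
  have hy := @hCT y
  have hadj := G.adj_comm x y
  simp only [Set.mem_union, mem_cut, Set.mem_sdiff] at hxy hyx ⊢
  tauto

theorem disjoint_cut_cut_diff {C T : Set V} (hCT : C ⊆ T)
    (hC : ∀ x ∈ C, ∀ y ∈ T \ C, ¬G.Adj x y) : Disjoint (cut G C) (cut G (T \ C)) := by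
  refine Set.disjoint_left.2 fun e he he' => ?_
  induction e using Sym2.ind with | _ x y =>
  have hxy := hC x
  have hyx := hC y
  have hx := @hCT x
  have hy := @hCT y
  have hadj := G.adj_comm x y
  simp only [mem_cut, Set.mem_sdiff] at hxy hyx he he'
  tauto

theorem exists_cut_union_of_not_preconnected (hG : G.Preconnected) {T : Set V}
    (hT : ¬(G.induce T).Preconnected) :
    ∃ C, cut G C ∪ cut G (T \ C) = cut G T ∧ Disjoint (cut G C) (cut G (T \ C)) ∧
      (cut G C).Nonempty ∧ (cut G (T \ C)).Nonempty := by
  obtain ⟨u, v, huv⟩ : ∃ u v, ¬(G.induce T).Reachable u v := by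
    simpa [SimpleGraph.Preconnected] using hT
  let C : Set V := {w | ∃ hw : w ∈ T, (G.induce T).Reachable u ⟨w, hw⟩}
  have hCT : C ⊆ T := fun w hw => hw.1
  have hC : ∀ x ∈ C, ∀ y ∈ T \ C, ¬G.Adj x y := by
    rintro x ⟨hxT, hux⟩ y ⟨hyT, hyC⟩ hxy
    exact hyC ⟨hyT, hux.trans (SimpleGraph.Adj.reachable (G := G.induce T) hxy)⟩
  have huC : (u : V) ∈ C := ⟨u.2, .rfl⟩
  have hvC : (v : V) ∉ C := fun ⟨_, huv'⟩ => huv huv'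
  exact ⟨C, cut_union_cut_diff hCT hC, disjoint_cut_cut_diff hCT hC,
    cut_nonempty hG huC hvC, cut_nonempty hG ⟨v.2, hvC⟩ fun h => h.2 huC⟩

theorem indVec_empty : indVec G ∅ = 0 := by
  funext e
  simp [indVec]

theorem indVec_union {D₁ D₂ : Set (Sym2 V)} (hD : Disjoint D₁ D₂) :
    indVec G (D₁ ∪ D₂) = indVec G D₁ + indVec G D₂ := by
  funext e
  by_cases h₁ : (e : Sym2 V) ∈ D₁ <;> by_cases h₂ : (e : Sym2 V) ∈ D₂ <;>
    simp [indVec, h₁, h₂]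
  exact Set.disjoint_left.1 hD h₁ h₂

theorem isBond_empty (hG : G.Preconnected) : IsBond G ∅ :=
  ⟨∅, cut_empty.symm, fun u => u.2.elim, by
    rw [Set.compl_empty]
    exact (SimpleGraph.induceUnivIso G).preconnected_iff.2 hG⟩

theorem indVec_cut_mem_closure_bonds [Finite V] (hG : G.Preconnected) (S : Set V) :
    indVec G (cut G S) ∈ AddSubmonoid.closure {x | ∃ D, IsBond G D ∧ x = indVec G D} := by
  induction hn : (cut G S).ncard using Nat.strong_induction_on generalizing S with
  | _ n ih =>
  by_cases hbond : (G.induce S).Preconnected ∧ (G.induce Sᶜ).Preconnected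
  · exact AddSubmonoid.subset_closure ⟨_, ⟨S, rfl, hbond⟩, rfl⟩
  obtain ⟨T, hTS, hT⟩ : ∃ T, cut G T = cut G S ∧ ¬(G.induce T).Preconnected := by
    rcases not_and_or.1 hbond with h | h
    exacts [⟨S, rfl, h⟩, ⟨Sᶜ, cut_compl S, h⟩]
  obtain ⟨C, hunion, hdisj, hC, hTC⟩ := exists_cut_union_of_not_preconnected hG hT
  have hcard := Set.ncard_union_eq hdisj
  rw [hunion, hTS, hn] at hcard
  have hC₀ := (Set.ncard_pos).2 hC
  have hTC₀ := (Set.ncard_pos).2 hTC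
  rw [← hTS, ← hunion, indVec_union hdisj]
  exact add_mem (ih _ (by omega) C rfl) (ih _ (by omega) (T \ C) rfl)

end Graph

theorem homogeneous_facet_bond_iff_cut_general {V : Type*} [Fintype V]
    (G : SimpleGraph V) [DecidableRel G.Adj] (hG : G.Connected)
    (a : ↥G.edgeSet → ℝ) :
    IsFacet (bondPolytope G) a 0 ↔ IsFacet (cutPolytope G) a 0 := by
  refine isFacet_convexHull_iff_of_subset_addSubmonoidClosure ?_ ?_ ?_ a
  · exact ⟨∅, isBond_empty hG.preconnected, indVec_empty.symm⟩
  · rintro _ ⟨D, ⟨S, hD, -⟩, rfl⟩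
    exact ⟨D, ⟨S, hD⟩, rfl⟩
  · rintro _ ⟨_, ⟨S, rfl⟩, rfl⟩
    exact indVec_cut_mem_closure_bonds hG.preconnected S

theorem homogeneous_facet_bond_iff_cut {V : Type*} [Fintype V] [DecidableEq V]
    (G : SimpleGraph V) [DecidableRel G.Adj] (hG : G.Connected)
    (a : ↥G.edgeSet → ℝ) (ha : a ≠ 0) :
    IsFacet (bondPolytope G) a 0 ↔ IsFacet (cutPolytope G) a 0 :=
  homogeneous_facet_bond_iff_cut_general G hG a

end BondPolytope
end

section
/- Let G be a finite simple graph that is the union of two subgraphs G₁ and G₂, and let δ be a bond of G. (i) If V(G₁) ∩ V(G₂) consists of a single vertex and E(G₁) ∩ E(G₂) = ∅, then there is an i ∈ {1, 2} with δ ⊆ E(G_i) and δ ∩ E(G_{3−i}) = ∅. (ii) If V(G₁) ∩ V(G₂) = {v, w}, E(G₁) ∩ E(G₂) = {e} where e = vw, and each of G₁, G₂ has at least 3 vertices, then, writing δ_i = δ ∩ E(G_i), either e ∈ δ and δ₁ is a bond of G₁ and δ₂ is a bond of G₂, or e ∉ δ and there is an i ∈ {1, 2} with δ = δ_i a bond of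 G_i and δ_{3−i} = ∅. -/
open Finset

namespace BondPolytope

variable {V : Type*}

/-- The cut `δ(S)` inside the graph with edge set `E0`. -/
def cutIn (E0 : Set (Sym2 V)) (S : Set V) : Set (Sym2 V) :=
  {e | e ∈ E0 ∧ ∃ u w, e = s(u, w) ∧ u ∈ S ∧ w ∉ S}

/-- The vertex set `S` induces a connected (possibly empty) subgraph of the graph with
edge set `E0`: any two vertices of `S` are joined by a walk using only edges of `E0`
with both endpoints in `S`. -/
def ConnOn (E0 : Set (Sym2 V)) (S : Set V) : Prop :=
  ∀ x ∈ S, ∀ y ∈ S, (SimpleGraph.fromEdgeSet {e | e ∈ E0 ∧ ∀ z ∈ e, z ∈ S}).Reachable x y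

/-- `D` is a bond of the graph with vertex set `W` and edge set `E0`. -/
def IsBondOn (W : Set V) (E0 : Set (Sym2 V)) (D : Set (Sym2 V)) : Prop :=
  ∃ S : Set V, S ⊆ W ∧ D = cutIn E0 S ∧ ConnOn E0 S ∧ ConnOn E0 (W \ S)

section Aux

open SimpleGraph

lemma reach_lift {G' G'' : SimpleGraph V} (π : V → V)
    (h : ∀ a b : V, G'.Adj a b → G''.Reachable (π a) (π b)) {x y : V}
    (hr : G'.Reachable x y) : G''.Reachable (π x) (π y) := by
  obtain ⟨p⟩ := hr
  induction p with
  | nil => exact Reachable.refl _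
  | cons ha p ih => exact (h _ _ ha).trans ih

lemma reach_inv {G' : SimpleGraph V} (P : V → Prop)
    (h : ∀ a b : V, G'.Adj a b → (P a ↔ P b)) {x y : V}
    (hr : G'.Reachable x y) : P x ↔ P y := by
  obtain ⟨p⟩ := hr
  induction p with
  | nil => exact Iff.rfl
  | cons ha p ih => exact (h _ _ ha).trans ih

lemma adj_or {G : SimpleGraph V} {H₁ H₂ : G.Subgraph} (hunion : H₁ ⊔ H₂ = ⊤)
    {a b : V} (h : G.Adj a b) : H₁.Adj a b ∨ H₂.Adj a b := by
  have h' : (⊤ : G.Subgraph).Adj a b := SimpleGraph.Subgraph.top_adj.mpr h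
  rw [← hunion] at h'
  exact SimpleGraph.Subgraph.sup_adj.mp h'

lemma memInv {G : SimpleGraph V} {H₁ H₂ : G.Subgraph} (hunion : H₁ ⊔ H₂ = ⊤)
    {T : Set V} (h : ∀ p, p ∈ H₁.verts → p ∈ H₂.verts → p ∉ T) {x y : V}
    (hr : (SimpleGraph.fromEdgeSet {e | e ∈ G.edgeSet ∧ ∀ z ∈ e, z ∈ T}).Reachable x y) :
    x ∈ H₁.verts ↔ y ∈ H₁.verts := by
  refine reach_inv _ ?_ hr
  intro a b hab
  rw [SimpleGraph.fromEdgeSet_adj] at hab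
  obtain ⟨⟨hG, hT⟩, hne⟩ := hab
  have haT : a ∈ T := hT a (Sym2.mem_mk_left a b)
  have hbT : b ∈ T := hT b (Sym2.mem_mk_right a b)
  rcases adj_or hunion ((SimpleGraph.mem_edgeSet G).mp hG) with h1 | h2
  · exact iff_of_true (H₁.edge_vert h1) (H₁.edge_vert h1.symm)
  · exact iff_of_false (fun ha1 => h a ha1 (H₂.edge_vert h2) haT)
      (fun hb1 => h b hb1 (H₂.edge_vert h2.symm) hbT)

lemma connSide {G : SimpleGraph V} {H₁ H₂ : G.Subgraph} (hunion : H₁ ⊔ H₂ = ⊤)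
    {v w : V} (hcap : H₁.verts ∩ H₂.verts = {v, w}) (hvw : v ≠ w)
    (hE1 : s(v, w) ∈ H₁.edgeSet) {T : Set V}
    (hT : ConnOn G.edgeSet T) : ConnOn H₁.edgeSet (T ∩ H₁.verts) := by
  classical
  have hv1 : v ∈ H₁.verts := by
    have : v ∈ H₁.verts ∩ H₂.verts := by rw [hcap]; exact Or.inl rfl
    exact this.1
  have hw1 : w ∈ H₁.verts := by
    have : w ∈ H₁.verts ∩ H₂.verts := by rw [hcap]; exact Or.inr rfl
    exact this.1
  intro x hx y hy
  set G₁ := SimpleGraph.fromEdgeSet {e | e ∈ H₁.edgeSet ∧ ∀ z ∈ e, z ∈ T ∩ H₁.verts} with hG₁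
  obtain ⟨b, hbT, hbV, hb⟩ :
      ∃ b, b ∈ T ∧ b ∈ H₁.verts ∧ ∀ p, (p = v ∨ p = w) → p ∈ T → G₁.Reachable p b := by
    by_cases hvT : v ∈ T
    · refine ⟨v, hvT, hv1, ?_⟩
      rintro p (rfl | rfl) hpT
      · exact Reachable.refl _
      · have hadj : G₁.Adj p v := by
          rw [hG₁, SimpleGraph.fromEdgeSet_adj]
          refine ⟨⟨by rwa [Sym2.eq_swap], ?_⟩, hvw.symm⟩
          intro z hz
          rw [Sym2.mem_iff] at hz
          rcases hz with rfl | rfl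
          · exact ⟨hpT, hw1⟩
          · exact ⟨hvT, hv1⟩
        exact hadj.reachable
    · by_cases hwT : w ∈ T
      · refine ⟨w, hwT, hw1, ?_⟩
        rintro p (rfl | rfl) hpT
        · exact absurd hpT hvT
        · exact Reachable.refl _
      · refine ⟨x, hx.1, hx.2, ?_⟩
        rintro p (rfl | rfl) hpT
        · exact absurd hpT hvT
        · exact absurd hpT hwT
  set π : V → V := fun z => if z ∈ H₁.verts then z else b with hπ
  have hπ_in : ∀ z, z ∈ H₁.verts → π z = z := fun z hz => if_pos hz
  have hπ_out : ∀ z, z ∉ H₁.verts → π z = b := fun z hz => if_neg hz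
  have hstep : ∀ a c : V,
      (SimpleGraph.fromEdgeSet {e | e ∈ G.edgeSet ∧ ∀ z ∈ e, z ∈ T}).Adj a c →
      G₁.Reachable (π a) (π c) := by
    intro a c hac
    rw [SimpleGraph.fromEdgeSet_adj] at hac
    obtain ⟨⟨hG, hTz⟩, hne⟩ := hac
    have haT : a ∈ T := hTz a (Sym2.mem_mk_left a c)
    have hcT : c ∈ T := hTz c (Sym2.mem_mk_right a c)
    have hH1 : a ∈ H₁.verts → c ∈ H₁.verts → H₁.Adj a c := by
      intro ha hc
      rcases adj_or hunion ((SimpleGraph.mem_edgeSet G).mp hG) with h1 | h2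
      · exact h1
      · have ha' : a = v ∨ a = w := by
          have : a ∈ H₁.verts ∩ H₂.verts := ⟨ha, H₂.edge_vert h2⟩
          rwa [hcap] at this
        have hc' : c = v ∨ c = w := by
          have : c ∈ H₁.verts ∩ H₂.verts := ⟨hc, H₂.edge_vert h2.symm⟩
          rwa [hcap] at this
        have heq : s(a, c) = s(v, w) := by
          rcases ha' with rfl | rfl <;> rcases hc' with rfl | rfl
          · exact absurd rfl hne
          · rfl
          · exact Sym2.eq_swap
          · exact absurd rfl hne
        exact SimpleGraph.Subgraph.mem_edgeSet.mp (by rw [heq]; exact hE1)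
    by_cases ha : a ∈ H₁.verts <;> by_cases hc : c ∈ H₁.verts
    · have hadj : G₁.Adj a c := by
        rw [hG₁, SimpleGraph.fromEdgeSet_adj]
        refine ⟨⟨SimpleGraph.Subgraph.mem_edgeSet.mpr (hH1 ha hc), ?_⟩, hne⟩
        intro z hz
        rw [Sym2.mem_iff] at hz
        rcases hz with rfl | rfl
        · exact ⟨haT, ha⟩
        · exact ⟨hcT, hc⟩
      rw [hπ_in a ha, hπ_in c hc]
      exact hadj.reachable
    · have h2 : H₂.Adj a c := by
        rcases adj_or hunion ((SimpleGraph.mem_edgeSet G).mp hG) with h1 | h2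
        · exact absurd (H₁.edge_vert h1.symm) hc
        · exact h2
      have ha' : a = v ∨ a = w := by
        have : a ∈ H₁.verts ∩ H₂.verts := ⟨ha, H₂.edge_vert h2⟩
        rwa [hcap] at this
      rw [hπ_in a ha, hπ_out c hc]
      exact hb a ha' haT
    · have h2 : H₂.Adj a c := by
        rcases adj_or hunion ((SimpleGraph.mem_edgeSet G).mp hG) with h1 | h2
        · exact absurd (H₁.edge_vert h1) ha
        · exact h2
      have hc' : c = v ∨ c = w := by
        have : c ∈ H₁.verts ∩ H₂.verts := ⟨hc, H₂.edge_vert h2.symm⟩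
        rwa [hcap] at this
      rw [hπ_out a ha, hπ_in c hc]
      exact (hb c hc' hcT).symm
    · rw [hπ_out a ha, hπ_out c hc]
  have hr := reach_lift π hstep (hT x hx.1 y hy.1)
  rwa [hπ_in x hx.2, hπ_in y hy.2] at hr

lemma cutEq {G : SimpleGraph V} (H₁ : G.Subgraph) {S : Set V} {D : Set (Sym2 V)}
    (hDS : D = cutIn G.edgeSet S) :
    D ∩ H₁.edgeSet = cutIn H₁.edgeSet (S ∩ H₁.verts) := by
  subst hDS
  ext f
  constructor
  · rintro ⟨⟨hfG, u, x, rfl, huS, hxS⟩, hf1⟩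
    have hadj : H₁.Adj u x := SimpleGraph.Subgraph.mem_edgeSet.mp hf1
    exact ⟨hf1, u, x, rfl, ⟨huS, H₁.edge_vert hadj⟩, fun h => hxS h.1⟩
  · rintro ⟨hf1, u, x, rfl, ⟨huS, hu1⟩, hx⟩
    have hadj : H₁.Adj u x := SimpleGraph.Subgraph.mem_edgeSet.mp hf1
    have hx1 : x ∈ H₁.verts := H₁.edge_vert hadj.symm
    exact ⟨⟨H₁.edgeSet_subset hf1, u, x, rfl, huS, fun hxS => hx ⟨hxS, hx1⟩⟩, hf1⟩

lemma bondPart {G : SimpleGraph V} {H₁ H₂ : G.Subgraph} (hunion : H₁ ⊔ H₂ = ⊤)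
    {v w : V} (hcap : H₁.verts ∩ H₂.verts = {v, w}) (hvw : v ≠ w)
    (hE1 : s(v, w) ∈ H₁.edgeSet) {S : Set V} {D : Set (Sym2 V)}
    (hDS : D = cutIn G.edgeSet S)
    (hcS : ConnOn G.edgeSet S) (hcSc : ConnOn G.edgeSet (Set.univ \ S)) :
    IsBondOn H₁.verts H₁.edgeSet (D ∩ H₁.edgeSet) := by
  refine ⟨S ∩ H₁.verts, Set.inter_subset_right, cutEq H₁ hDS,
    connSide hunion hcap hvw hE1 hcS, ?_⟩
  have h2 : H₁.verts \ (S ∩ H₁.verts) = (Set.univ \ S) ∩ H₁.verts := by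
    ext z
    simp only [Set.mem_diff, Set.mem_inter_iff, Set.mem_univ, true_and]
    tauto
  rw [h2]
  exact connSide hunion hcap hvw hE1 hcSc

end Aux

theorem bonds_over_clique_sums {V : Type*} [Fintype V] [DecidableEq V]
    (G : SimpleGraph V) (H₁ H₂ : G.Subgraph) (hunion : H₁ ⊔ H₂ = ⊤)
    (D : Set (Sym2 V)) (hD : IsBondOn Set.univ G.edgeSet D) :
    -- (i)
    ((∀ v : V, H₁.verts ∩ H₂.verts = {v} → H₁.edgeSet ∩ H₂.edgeSet = ∅ →
        (D ⊆ H₁.edgeSet ∧ D ∩ H₂.edgeSet = ∅) ∨ (D ⊆ H₂.edgeSet ∧ D ∩ H₁.edgeSet = ∅)) ∧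
    -- (ii)
     (∀ v w : V, v ≠ w → H₁.verts ∩ H₂.verts = {v, w} →
        H₁.edgeSet ∩ H₂.edgeSet = {s(v, w)} →
        3 ≤ H₁.verts.ncard → 3 ≤ H₂.verts.ncard →
        (s(v, w) ∈ D ∧ IsBondOn H₁.verts H₁.edgeSet (D ∩ H₁.edgeSet) ∧
          IsBondOn H₂.verts H₂.edgeSet (D ∩ H₂.edgeSet)) ∨
        (s(v, w) ∉ D ∧
          ((D = D ∩ H₁.edgeSet ∧ IsBondOn H₁.verts H₁.edgeSet D ∧ D ∩ H₂.edgeSet = ∅) ∨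
           (D = D ∩ H₂.edgeSet ∧ IsBondOn H₂.verts H₂.edgeSet D ∧ D ∩ H₁.edgeSet = ∅))))) := by
  obtain ⟨S, -, hDS, hcS, hcSc⟩ := hD
  have hunion' : H₂ ⊔ H₁ = ⊤ := by rw [sup_comm]; exact hunion
  -- every edge of G is an edge of H₁ or of H₂
  have hEG : ∀ f ∈ G.edgeSet, f ∈ H₁.edgeSet ∨ f ∈ H₂.edgeSet := by
    intro f hf
    induction f using Sym2.ind with
    | _ a b =>
      rcases adj_or hunion ((SimpleGraph.mem_edgeSet G).mp hf) with h | h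
      · exact Or.inl (SimpleGraph.Subgraph.mem_edgeSet.mpr h)
      · exact Or.inr (SimpleGraph.Subgraph.mem_edgeSet.mpr h)
  have hDG : ∀ f ∈ D, f ∈ G.edgeSet := by
    intro f hf; rw [hDS] at hf; exact hf.1
  -- decompose an element of D known to lie in a subgraph
  have hD_elt : ∀ {H : G.Subgraph} {f : Sym2 V}, f ∈ D → f ∈ H.edgeSet →
      ∃ a b : V, f = s(a, b) ∧ a ∈ S ∧ b ∉ S ∧ a ∈ H.verts ∧ b ∈ H.verts := by
    intro H f hf hfH
    rw [hDS] at hf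
    obtain ⟨-, a, b, rfl, haS, hbS⟩ := hf
    have hadj : H.Adj a b := SimpleGraph.Subgraph.mem_edgeSet.mp hfH
    exact ⟨a, b, rfl, haS, hbS, H.edge_vert hadj, H.edge_vert hadj.symm⟩
  constructor
  · -- part (i)
    intro v hv _hE
    by_cases h2 : D ∩ H₂.edgeSet = ∅
    · left
      refine ⟨?_, h2⟩
      intro f hf
      rcases hEG f (hDG f hf) with h | h
      · exact h
      · exact absurd (Set.mem_inter hf h) (by rw [h2]; exact Set.notMem_empty f)
    · by_cases h1 : D ∩ H₁.edgeSet = ∅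
      · right
        refine ⟨?_, h1⟩
        intro f hf
        rcases hEG f (hDG f hf) with h | h
        · exact absurd (Set.mem_inter hf h) (by rw [h1]; exact Set.notMem_empty f)
        · exact h
      · exfalso
        obtain ⟨f₁, hf₁D, hf₁⟩ := Set.nonempty_iff_ne_empty.mpr h1
        obtain ⟨f₂, hf₂D, hf₂⟩ := Set.nonempty_iff_ne_empty.mpr h2
        obtain ⟨a, b, rfl, haS, hbS, ha1, hb1⟩ := hD_elt hf₁D hf₁
        obtain ⟨c, d, rfl, hcS', hdS, hc2, hd2⟩ := hD_elt hf₂D hf₂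
        by_cases hvS : v ∈ S
        · have hr := hcSc b ⟨Set.mem_univ b, hbS⟩ d ⟨Set.mem_univ d, hdS⟩
          have hiff := memInv hunion (fun p hp1 hp2 hpT => by
            have hpv : p ∈ ({v} : Set V) := by rw [← hv]; exact ⟨hp1, hp2⟩
            rw [Set.mem_singleton_iff] at hpv
            exact hpT.2 (by rwa [hpv])) hr
          have hd1 : d ∈ H₁.verts := hiff.mp hb1
          have : d ∈ ({v} : Set V) := by rw [← hv]; exact ⟨hd1, hd2⟩
          rw [Set.mem_singleton_iff] at this
          exact hdS (by rwa [this])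
        · have hr := hcS a haS c hcS'
          have hiff := memInv hunion (fun p hp1 hp2 hpT => by
            have hpv : p ∈ ({v} : Set V) := by rw [← hv]; exact ⟨hp1, hp2⟩
            rw [Set.mem_singleton_iff] at hpv
            exact hvS (by rwa [← hpv])) hr
          have hc1 : c ∈ H₁.verts := hiff.mp ha1
          have : c ∈ ({v} : Set V) := by rw [← hv]; exact ⟨hc1, hc2⟩
          rw [Set.mem_singleton_iff] at this
          exact hvS (by rwa [← this])
  · -- part (ii)
    intro v w hvw hcap hEcap _h31 _h32
    have hEmem : s(v, w) ∈ H₁.edgeSet ∩ H₂.edgeSet := by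
      rw [hEcap]; exact rfl
    obtain ⟨hE1, hE2⟩ := hEmem
    have hcap' : H₂.verts ∩ H₁.verts = {v, w} := by rw [Set.inter_comm]; exact hcap
    have hB1 := bondPart hunion hcap hvw hE1 hDS hcS hcSc
    have hB2 := bondPart hunion' hcap' hvw hE2 hDS hcS hcSc
    by_cases hin : s(v, w) ∈ D
    · exact Or.inl ⟨hin, hB1, hB2⟩
    · right
      refine ⟨hin, ?_⟩
      -- v and w are on the same side of S
      have hside : v ∈ S ↔ w ∈ S := by
        constructor
        · intro hvS
          by_contra hwS
          exact hin (by rw [hDS]; exact ⟨H₁.edgeSet_subset hE1, v, w, rfl, hvS, hwS⟩)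
        · intro hwS
          by_contra hvS
          exact hin (by rw [hDS]; exact ⟨H₁.edgeSet_subset hE1, w, v, Sym2.eq_swap, hwS, hvS⟩)
      by_cases h2 : D ∩ H₂.edgeSet = ∅
      · left
        have hDsub : D = D ∩ H₁.edgeSet := by
          apply Set.eq_of_subset_of_subset
          · intro f hf
            rcases hEG f (hDG f hf) with h | h
            · exact ⟨hf, h⟩
            · exact absurd (Set.mem_inter hf h) (by rw [h2]; exact Set.notMem_empty f)
          · exact Set.inter_subset_left
        exact ⟨hDsub, by rw [hDsub]; exact hB1, h2⟩
      · by_cases h1 : D ∩ H₁.edgeSet = ∅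
        · right
          have hDsub : D = D ∩ H₂.edgeSet := by
            apply Set.eq_of_subset_of_subset
            · intro f hf
              rcases hEG f (hDG f hf) with h | h
              · exact absurd (Set.mem_inter hf h) (by rw [h1]; exact Set.notMem_empty f)
              · exact ⟨hf, h⟩
            · exact Set.inter_subset_left
          exact ⟨hDsub, by rw [hDsub]; exact hB2, h1⟩
        · exfalso
          obtain ⟨f₁, hf₁D, hf₁⟩ := Set.nonempty_iff_ne_empty.mpr h1
          obtain ⟨f₂, hf₂D, hf₂⟩ := Set.nonempty_iff_ne_empty.mpr h2
          obtain ⟨a, b, rfl, haS, hbS, ha1, hb1⟩ := hD_elt hf₁D hf₁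
          obtain ⟨c, d, rfl, hcS', hdS, hc2, hd2⟩ := hD_elt hf₂D hf₂
          by_cases hvS : v ∈ S
          · -- both v, w ∈ S; look at the complement side
            have hwS : w ∈ S := hside.mp hvS
            have hr := hcSc b ⟨Set.mem_univ b, hbS⟩ d ⟨Set.mem_univ d, hdS⟩
            have hiff := memInv hunion (fun p hp1 hp2 hpT => by
              have hpv : p ∈ ({v, w} : Set V) := by rw [← hcap]; exact ⟨hp1, hp2⟩
              rcases hpv with rfl | rfl
              · exact hpT.2 hvS
              · exact hpT.2 hwS) hr
            have hd1 : d ∈ H₁.verts := hiff.mp hb1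
            have : d ∈ ({v, w} : Set V) := by rw [← hcap]; exact ⟨hd1, hd2⟩
            rcases this with rfl | rfl
            · exact hdS hvS
            · exact hdS hwS
          · -- both v, w ∉ S; look at S
            have hwS : w ∉ S := fun h => hvS (hside.mpr h)
            have hr := hcS a haS c hcS'
            have hiff := memInv hunion (fun p hp1 hp2 hpT => by
              have hpv : p ∈ ({v, w} : Set V) := by rw [← hcap]; exact ⟨hp1, hp2⟩
              rcases hpv with rfl | rfl
              · exact hvS hpT
              · exact hwS hpT) hr
            have hc1 : c ∈ H₁.verts := hiff.mp ha1
            have : c ∈ ({v, w} : Set V) := by rw [← hcap]; exact ⟨hc1, hc2⟩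
            rcases this with rfl | rfl
            · exact hvS hcS'
            · exact hwS hcS'

end BondPolytope
end

section
/- Let G be a 3-connected finite simple graph and let C be a non-interleaved cycle in G. Then C is an induced cycle of G, i.e., C has no chord: no edge of G joins two vertices of C that are not consecutive on C. -/
open Finset

namespace BondPolytope

variable {V : Type*}

/-- The cycle given by the closed walk `c` is interleaved: there are four vertices
appearing in this cyclic order along `c` that are connected crosswise by two
vertex-disjoint paths in `G - E(c)`. -/
def IsInterleaved (G : SimpleGraph V) {v : V} (c : G.Walk v v) : Prop :=
  ∃ i₁ i₂ i₃ i₄ : ℕ, i₁ < i₂ ∧ i₂ < i₃ ∧ i₃ < i₄ ∧ i₄ < c.length ∧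
    ∃ (q₁ : (G.deleteEdges {e | e ∈ c.edges}).Walk (c.getVert i₁) (c.getVert i₃))
      (q₂ : (G.deleteEdges {e | e ∈ c.edges}).Walk (c.getVert i₂) (c.getVert i₄)),
      q₁.IsPath ∧ q₂.IsPath ∧ ∀ x ∈ q₁.support, x ∉ q₂.support

/-- `G` is 3-connected: it has at least 4 vertices and deleting any at most 2 vertices
leaves it connected. -/
def ThreeConnected {V : Type*} [Fintype V] (G : SimpleGraph V) : Prop :=
  4 ≤ Fintype.card V ∧ ∀ W : Set V, W.ncard ≤ 2 → (G.induce (Wᶜ : Set V)).Connected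

/-! A chord `xy` of the cycle splits the rest of `C` into two nonempty arcs. Since `G - {x, y}`
is connected, some walk avoiding `x` and `y` runs from one arc to the other; cutting it at the
boundary of the set of vertices reachable from the first arc in `G - E(C) - {x, y}` yields a
path in `G - E(C)` between the arcs, because cycle edges away from `x` and `y` never leave an
arc. That path and the chord are vertex-disjoint and join crosswise vertices of `C`. -/

open SimpleGraph Walk

theorem exists_isPath_deleteEdges_of_walk {G : SimpleGraph V} {F : Set (Sym2 V)}
    {U S T : Set V} (hF : ∀ u ∈ U, ∀ w ∈ U, s(u, w) ∈ F → (u ∈ S ∧ w ∈ S) ∨ (u ∈ T ∧ w ∈ T))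
    {a b : V} (ha : a ∈ S) (hb : b ∈ T) (p : G.Walk a b) (hp : ∀ z ∈ p.support, z ∈ U) :
    ∃ a' ∈ S, ∃ b' ∈ T, ∃ q : (G.deleteEdges F).Walk a' b',
      q.IsPath ∧ ∀ z ∈ q.support, z ∈ U := by
  classical
  let R : Set V := {z | ∃ a' ∈ S, ∃ q : (G.deleteEdges F).Walk a' z, ∀ z ∈ q.support, z ∈ U}
  suffices ∃ b' ∈ T, b' ∈ R by
    obtain ⟨b', hb', a', ha', q, hq⟩ := this
    exact ⟨a', ha', b', hb', q.bypass, q.bypass_isPath,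
      fun z hz => hq z (q.support_bypass_subset_support hz)⟩
  by_contra! hR
  have haR : a ∈ R := ⟨a, ha, .nil, by simpa using hp a p.start_mem_support⟩
  obtain ⟨d, hd, ⟨a', ha', q, hq⟩, hdR⟩ := p.exists_boundary_dart R haR (hR b hb)
  have hfst : d.fst ∈ U := hp _ (p.dart_fst_mem_support_of_mem_darts hd)
  have hsnd : d.snd ∈ U := hp _ (p.dart_snd_mem_support_of_mem_darts hd)
  by_cases hdF : s(d.fst, d.snd) ∈ F
  · rcases hF _ hfst _ hsnd hdF with ⟨-, hS⟩ | ⟨hT, -⟩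
    · exact hdR ⟨d.snd, hS, .nil, by simpa using hsnd⟩
    · exact hR _ hT ⟨a', ha', q, hq⟩
  · refine hdR ⟨a', ha', q.concat (deleteEdges_adj.2 ⟨d.adj, hdF⟩), fun z hz => ?_⟩
    simp only [support_concat, List.mem_append, List.mem_singleton] at hz
    rcases hz with hz | rfl
    exacts [hq z hz, hsnd]

theorem ThreeConnected.exists_walk_of_ncard_le_two [Fintype V] {G : SimpleGraph V}
    (h3 : ThreeConnected G) {W : Set V} (hW : W.ncard ≤ 2) {a b : V} (ha : a ∈ Wᶜ)
    (hb : b ∈ Wᶜ) : ∃ p : G.Walk a b, ∀ z ∈ p.support, z ∈ Wᶜ := by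
  obtain ⟨p⟩ := (h3.2 W hW).preconnected ⟨a, ha⟩ ⟨b, hb⟩
  refine ⟨p.map (Embedding.induce _).toHom, fun z hz => ?_⟩
  obtain ⟨⟨z, hzW⟩, -, rfl⟩ := List.mem_map.1 ((support_map _ p) ▸ hz)
  exact hzW

section Cycle

variable {G : SimpleGraph V} {v : V} {c : G.Walk v v}

theorem _root_.SimpleGraph.Walk.IsCycle.exists_getVert_eq_of_mem_support (hc : c.IsCycle)
    {z : V} (hz : z ∈ c.support) : ∃ t < c.length, c.getVert t = z := by
  obtain ⟨t, rfl, ht⟩ := mem_support_iff_exists_getVert.1 hz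
  rcases ht.lt_or_eq with ht | rfl
  · exact ⟨t, ht, rfl⟩
  · exact ⟨0, by have := hc.three_le_length; omega, by simp⟩

theorem _root_.SimpleGraph.Walk.IsCycle.getVert_eq_getVert_iff (hc : c.IsCycle) {t₁ t₂ : ℕ}
    (h₁ : t₁ < c.length) (h₂ : t₂ < c.length) : c.getVert t₁ = c.getVert t₂ ↔ t₁ = t₂ :=
  ⟨fun h => hc.getVert_injOn' (by simp only [Set.mem_ofPred_eq]; omega)
    (by simp only [Set.mem_ofPred_eq]; omega) h, congrArg _⟩

def innerArc (c : G.Walk v v) (i j : ℕ) : Set V :=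
  c.getVert '' Set.Ioo i j

def outerArc (c : G.Walk v v) (i j : ℕ) : Set V :=
  c.getVert '' {t | t < c.length ∧ (t < i ∨ j < t)}

theorem mem_arc_of_mem_edges {i j : ℕ} (hj : j < c.length) {u w : V}
    (hu : u ∈ ({c.getVert i, c.getVert j}ᶜ : Set V))
    (hw : w ∈ ({c.getVert i, c.getVert j}ᶜ : Set V)) (he : s(u, w) ∈ c.edges) :
    (u ∈ innerArc c i j ∧ w ∈ innerArc c i j) ∨ (u ∈ outerArc c i j ∧ w ∈ outerArc c i j) := by
  obtain ⟨t, ht, htuw⟩ := (mk_mem_edges_iff_exists c).1 he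
  suffices key : ∀ u w, u ∈ ({c.getVert i, c.getVert j}ᶜ : Set V) →
      w ∈ ({c.getVert i, c.getVert j}ᶜ : Set V) → u = c.getVert t → w = c.getVert (t + 1) →
      (u ∈ innerArc c i j ∧ w ∈ innerArc c i j) ∨ (u ∈ outerArc c i j ∧ w ∈ outerArc c i j) by
    rcases Sym2.eq_iff.1 htuw with ⟨rfl, rfl⟩ | ⟨rfl, rfl⟩
    · exact key _ _ hu hw rfl rfl
    · exact (key _ _ hw hu rfl rfl).imp And.symm And.symm
  rintro u w hu hw rfl rfl
  obtain ⟨t', ht', hwt', ht't⟩ : ∃ t' < c.length, c.getVert t' = c.getVert (t + 1) ∧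
      (t' = t + 1 ∨ t + 1 = c.length ∧ t' = 0) := by
    rcases (show t + 1 ≤ c.length from ht).lt_or_eq with h | h
    · exact ⟨t + 1, h, rfl, Or.inl rfl⟩
    · exact ⟨0, by omega, by rw [h, getVert_length, getVert_zero], Or.inr ⟨h, rfl⟩⟩
  rw [← hwt'] at hw ⊢
  have hpos : ∀ {r}, c.getVert r ∈ ({c.getVert i, c.getVert j}ᶜ : Set V) → r ≠ i ∧ r ≠ j := by
    rintro r hr
    exact ⟨by rintro rfl; simp at hr, by rintro rfl; simp at hr⟩
  have := hpos hu
  have := hpos hw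
  rcases (by omega : ((i < t ∧ t < j) ∧ (i < t' ∧ t' < j)) ∨
      ((t < i ∨ j < t) ∧ (t' < i ∨ j < t'))) with ⟨h, h'⟩ | ⟨h, h'⟩
  · exact Or.inl ⟨⟨t, h, rfl⟩, ⟨t', h', rfl⟩⟩
  · exact Or.inr ⟨⟨t, ⟨ht, h⟩, rfl⟩, ⟨t', ⟨ht', h'⟩, rfl⟩⟩

theorem isInterleaved_of_crossing {i s j t : ℕ} (his : i < s) (hsj : s < j) (hj : j < c.length)
    (ht : t < c.length) (htij : t < i ∨ j < t)
    (hchord : (G.deleteEdges {e | e ∈ c.edges}).Adj (c.getVert i) (c.getVert j))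
    (q : (G.deleteEdges {e | e ∈ c.edges}).Walk (c.getVert s) (c.getVert t)) (hq : q.IsPath)
    (hqU : ∀ z ∈ q.support, z ∈ ({c.getVert i, c.getVert j}ᶜ : Set V)) : IsInterleaved G c := by
  have hdisj : ∀ z ∈ q.support, z ∉ hchord.toWalk.support := fun z hz => by
    simpa [Adj.support_toWalk] using hqU z hz
  rcases htij with hti | hjt
  · refine ⟨t, i, s, j, hti, his, hsj, hj, q.reverse, hchord.toWalk, hq.reverse,
      hchord.isPath_toWalk, fun z hz => hdisj z ?_⟩
    rwa [support_reverse, List.mem_reverse] at hz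
  · exact ⟨i, s, j, t, his, hsj, hjt, ht, hchord.toWalk, q, hchord.isPath_toWalk, hq,
      fun z hz hz' => hdisj z hz' hz⟩

theorem isInterleaved_of_chord [Fintype V] (h3 : ThreeConnected G) (hc : c.IsCycle) {i j : ℕ}
    (hij : i < j) (hj : j < c.length) (hadj : G.Adj (c.getVert i) (c.getVert j))
    (hne : s(c.getVert i, c.getVert j) ∉ c.edges) : IsInterleaved G c := by
  have hU : ∀ {t}, t < c.length → t ≠ i → t ≠ j →
      c.getVert t ∈ ({c.getVert i, c.getVert j}ᶜ : Set V) := by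
    intro t ht hti htj
    simp only [Set.mem_compl_iff, Set.mem_insert_iff, Set.mem_singleton_iff,
      hc.getVert_eq_getVert_iff ht (hij.trans hj), hc.getVert_eq_getVert_iff ht hj]
    omega
  -- both arcs are nonempty, since `xy` is not an edge of `c`
  have hinner : i + 1 < j := by
    by_contra! h
    exact hne ((mk_mem_edges_iff_exists c).2 ⟨i, by omega, by rw [show i + 1 = j by omega]⟩)
  obtain ⟨t₀, ht₀, ht₀ij⟩ : ∃ t₀ < c.length, t₀ < i ∨ j < t₀ := by
    rcases Nat.eq_zero_or_pos i with rfl | hi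
    · refine ⟨j + 1, ?_, Or.inr j.lt_succ_self⟩
      by_contra! h
      exact hne ((mk_mem_edges_iff_exists c).2 ⟨j, hj, by
        rw [show j + 1 = c.length by omega, getVert_length, getVert_zero, Sym2.eq_swap]⟩)
    · exact ⟨0, by omega, Or.inl hi⟩
  obtain ⟨p, hp⟩ := h3.exists_walk_of_ncard_le_two (Set.ncard_pair hadj.ne).le
    (hU (t := i + 1) (by omega) (by omega) (by omega)) (hU ht₀ (by omega) (by omega))
  obtain ⟨_, ⟨s, hs, rfl⟩, _, ⟨t, ⟨ht, htij⟩, rfl⟩, q, hq, hqU⟩ :=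
    exists_isPath_deleteEdges_of_walk (F := {e | e ∈ c.edges})
      (fun u hu w hw he => mem_arc_of_mem_edges hj hu hw he)
      (⟨i + 1, ⟨by omega, hinner⟩, rfl⟩ : c.getVert (i + 1) ∈ innerArc c i j)
      (⟨t₀, ⟨ht₀, ht₀ij⟩, rfl⟩ : c.getVert t₀ ∈ outerArc c i j) p hp
  exact isInterleaved_of_crossing hs.1 hs.2 hj ht htij (deleteEdges_adj.2 ⟨hadj, hne⟩) q hq hqU

end Cycle

theorem noninterleaved_cycle_is_induced_general {V : Type*} [Fintype V]
    (G : SimpleGraph V) (h3 : ThreeConnected G)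
    (v : V) (c : G.Walk v v) (hc : c.IsCycle) (hni : ¬ IsInterleaved G c) :
    ∀ x ∈ c.support, ∀ y ∈ c.support, G.Adj x y → s(x, y) ∈ c.edges := by
  intro x hx y hy hxy
  by_contra hne
  obtain ⟨i, hi, rfl⟩ := hc.exists_getVert_eq_of_mem_support hx
  obtain ⟨j, hj, rfl⟩ := hc.exists_getVert_eq_of_mem_support hy
  rcases lt_trichotomy i j with h | rfl | h
  · exact hni (isInterleaved_of_chord h3 hc h hj hxy hne)
  · exact hxy.ne rfl
  · exact hni (isInterleaved_of_chord h3 hc h hi hxy.symm (by rwa [Sym2.eq_swap]))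

theorem noninterleaved_cycle_is_induced {V : Type*} [Fintype V] [DecidableEq V]
    (G : SimpleGraph V) [DecidableRel G.Adj] (h3 : ThreeConnected G)
    (v : V) (c : G.Walk v v) (hc : c.IsCycle) (hni : ¬ IsInterleaved G c) :
    ∀ x ∈ c.support, ∀ y ∈ c.support, G.Adj x y → s(x, y) ∈ c.edges :=
  noninterleaved_cycle_is_induced_general G h3 v c hc hni

end BondPolytope
end
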